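/- Let ℓ ≥ 1 and let u = (u_n)_{n>ℓ} be a pre-gelation large-cluster solution on [0,T] such that for every j ≥ 0 the moment series m_j(t) = ∑_{n>ℓ} n^j u_n(t) converges uniformly on [0,T]. Then for every k ≥ 1 and every t ∈ [0,T], ṁ_k(t) = −2 m_{k+1}(t)/m₁(t) + ∑_{q+r+s=k} (k!/(q! r! s!)) (−ℓ)^q m_{r+1}(t) m_{s+1}(t)/m₁(t)², where the sum is over triples of nonnegative integers (q,r,s) with q+r+s = k. -/

import Mathlib

open Finset Filter Topology

noncomputable section

/-- Total particle number for large clusters `m₁(t) = ∑_{i > ℓ} i u_i(t)`. -/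
def m1large (ℓ : ℕ) (u : ℕ → ℝ → ℝ) (t : ℝ) : ℝ :=
  ∑' i : ℕ, if ℓ + 1 ≤ i then (i : ℝ) * u i t else 0

/-- Right-hand side of the large-cluster equation for `u n` (`n > ℓ`):
`(1/m₁²) ∑_{i=ℓ+1}^{n−1} i(n+ℓ−i) u_i u_{n+ℓ−i} − 2 n u_n/m₁`
(the sum is empty when `n = ℓ+1`). -/
def largeRHS (ℓ : ℕ) (u : ℕ → ℝ → ℝ) (n : ℕ) (t : ℝ) : ℝ :=
  (1 / (m1large ℓ u t) ^ 2) *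
      (∑ i ∈ Finset.Icc (ℓ + 1) (n - 1),
        (i : ℝ) * ((n + ℓ - i : ℕ) : ℝ) * u i t * u (n + ℓ - i) t)
    - 2 * (n : ℝ) * u n t / m1large ℓ u t

/-- A large-cluster solution on `[0,T]`: a nonnegative family
`u_n ∈ C¹([0,T],[0,1])` (`n > ℓ`) solving the large-cluster system, whose
first-moment series converges uniformly on `[0,T]`. -/
structure IsLargeSolution (ℓ : ℕ) (T : ℝ) (u : ℕ → ℝ → ℝ) : Prop where
  mem : ∀ n, ℓ < n → ∀ t ∈ Set.Icc (0 : ℝ) T, u n t ∈ Set.Icc (0 : ℝ) 1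
  contDiff : ∀ n, ℓ < n → ContDiffOn ℝ 1 (u n) (Set.Icc 0 T)
  ode : ∀ n, ℓ < n → ∀ t ∈ Set.Icc (0 : ℝ) T,
    HasDerivWithinAt (u n) (largeRHS ℓ u n t) (Set.Icc 0 T) t
  m1_unif : TendstoUniformlyOn
    (fun N t => ∑ i ∈ Finset.range N, if ℓ + 1 ≤ i then (i : ℝ) * u i t else 0)
    (m1large ℓ u) atTop (Set.Icc 0 T)

/-- A pre-gelation large-cluster solution: in addition the second-moment series
`m₂(t) = ∑_{i > ℓ} i² u_i(t)` converges uniformly on `[0,T]`. -/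
structure IsPreGelLargeSolution (ℓ : ℕ) (T : ℝ) (u : ℕ → ℝ → ℝ)
    extends IsLargeSolution ℓ T u : Prop where
  m2_unif : TendstoUniformlyOn
    (fun N t => ∑ i ∈ Finset.range N, if ℓ + 1 ≤ i then (i : ℝ) ^ 2 * u i t else 0)
    (fun t => ∑' i : ℕ, if ℓ + 1 ≤ i then (i : ℝ) ^ 2 * u i t else 0)
    atTop (Set.Icc 0 T)

/-- The `j`-th moment of a large-cluster solution:
`m_j(t) = ∑_{n > ℓ} n^j u_n(t)`. -/
def largeMoment (ℓ : ℕ) (u : ℕ → ℝ → ℝ) (j : ℕ) (t : ℝ) : ℝ :=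
  ∑' n : ℕ, if ℓ + 1 ≤ n then (n : ℝ) ^ j * u n t else 0

/-! Each moment series has nonnegative terms. Reindexing the coagulation sum by the pair
`(i, j)` of merging clusters splits the term-by-term differentiated partial sums into a quadratic
part over `m₁²` and a loss part over `m₁`, both monotone in the truncation, so by Dini's theorem
they converge uniformly on any interval where `m₁ > 0`; the trinomial expansion of
`(i + j - ℓ) ^ k` identifies the limit with the right-hand side of the hierarchy, and a uniform
limit of derivatives is the derivative of the limit.

It remains to see that `m₁` does not vanish on `[0, T]`. Before a first zero `s` of `m₁` we
have `ṁ₁ = -ℓ` and `ṁ₂ = 2 (m₂ / m₁ - ℓ) ^ 2 - ℓ ^ 2 ≥ 2 - ℓ ^ 2`, because `m₂ ≥ (ℓ + 1) m₁`.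
Hence `m₁(0) ≥ ℓ s` and `m₂(0) ≤ (ℓ ^ 2 - 2) s`, so `(ℓ + 1) ℓ s ≤ (ℓ ^ 2 - 2) s`, which forces
`s ≤ 0`; and `s = 0` is excluded by `m₁(0) ≥ (ℓ + 1) m₀(0) = ℓ + 1`.
-/

theorem add_add_pow_eq_sum_trinomial {K : Type*} [Field K] [CharZero K] (a b c : K) (k : ℕ) :
    (a + b + c) ^ k = ∑ q ∈ range (k + 1), ∑ r ∈ range (k + 1), ∑ s ∈ range (k + 1),
      if q + r + s = k then
        (k.factorial : K) / (q.factorial * r.factorial * s.factorial) * a ^ q * (b ^ r * c ^ s)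
      else 0 := by
  rw [add_assoc, add_pow]
  refine sum_congr rfl fun q hq => ?_
  have hqk : q ≤ k := Nat.lt_succ_iff.1 (mem_range.1 hq)
  rw [add_pow, mul_sum, sum_mul]
  refine (sum_congr rfl fun r hr => ?_).trans
    (sum_subset (range_subset_range.2 (by omega)) fun r _ hr => ?_)
  · have hrk : r ≤ k - q := Nat.lt_succ_iff.1 (mem_range.1 hr)
    rw [sum_eq_single_of_mem (k - q - r) (mem_range.2 (by omega)) fun s _ hs => if_neg (by omega),
      if_pos (by omega), Nat.cast_choose K hqk, Nat.cast_choose K hrk]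
    have : ((k - q).factorial : K) ≠ 0 := Nat.cast_ne_zero.2 (Nat.factorial_ne_zero _)
    field_simp
  · exact sum_eq_zero fun s _ => if_neg (by simp only [mem_range] at hr; omega)

theorem hasDerivWithinAt_Icc_of_tendstoUniformlyOn {ι : Type*} {l : Filter ι} [l.NeBot]
    [l.IsCountablyGenerated] {f f' : ι → ℝ → ℝ} {g g' : ℝ → ℝ} {a b : ℝ}
    (hf : ∀ n, ∀ x ∈ Set.Icc a b, HasDerivWithinAt (f n) (f' n x) (Set.Icc a b) x)
    (hf' : ∀ n, ContinuousOn (f' n) (Set.Icc a b))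
    (hfg : ∀ x ∈ Set.Icc a b, Tendsto (fun n => f n x) l (𝓝 (g x)))
    (hfg' : TendstoUniformlyOn f' g' l (Set.Icc a b)) {x : ℝ} (hx : x ∈ Set.Icc a b) :
    HasDerivWithinAt g (g' x) (Set.Icc a b) x := by
  have hg' : ContinuousOn g' (Set.Icc a b) := hfg'.continuousOn (Frequently.of_forall hf')
  have hprimitive : ∀ y ∈ Set.Icc a b, g y = g a + ∫ s in a..y, g' s := by
    intro y hy
    have hsub : Set.uIcc a y ⊆ Set.Icc a b :=
      Set.uIcc_of_le hy.1 ▸ Set.Icc_subset_Icc_right hy.2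
    have hFTC : ∀ n, ∫ s in a..y, f' n s = f n y - f n a := fun n =>
      intervalIntegral.integral_eq_sub_of_hasDerivAt_of_le hy.1
        (fun z hz => (hf n z (Set.Icc_subset_Icc_right hy.2 hz)).continuousWithinAt.mono
          (Set.Icc_subset_Icc_right hy.2))
        (fun z hz => (hf n z ⟨hz.1.le, hz.2.le.trans hy.2⟩).hasDerivAt
          (Icc_mem_nhds hz.1 (hz.2.trans_le hy.2)))
        (((hf' n).mono hsub).intervalIntegrable)
    have hlim := (hfg'.mono hsub).tendsto_intervalIntegral_of_continuousOn
      (μ := MeasureTheory.volume) (Eventually.of_forall fun n => (hf' n).mono hsub)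
    simp only [hFTC] at hlim
    linarith [tendsto_nhds_unique hlim (((hfg y hy).sub (hfg a ⟨le_rfl, hx.1.trans hx.2⟩)))]
  have : Fact (x ∈ Set.Icc a b) := ⟨hx⟩
  have hint : HasDerivWithinAt (fun y => g a + ∫ s in a..y, g' s) (g' x) (Set.Icc a b) x :=
    (intervalIntegral.integral_hasDerivWithinAt_right
      ((hg'.mono (Set.Icc_subset_Icc_right hx.2)).intervalIntegrable_of_Icc hx.1)
      (hg'.stronglyMeasurableAtFilter_nhdsWithin measurableSet_Icc x) (hg' x hx)).const_add _
  exact hint.congr hprimitive (hprimitive x hx)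

theorem forall_pos_of_forall_Ico_pos {f : ℝ → ℝ} {a b : ℝ}
    (hf : ContinuousOn f (Set.Icc a b))
    (h : ∀ s ∈ Set.Icc a b, (∀ t ∈ Set.Ico a s, 0 < f t) → 0 < f s) :
    ∀ s ∈ Set.Icc a b, 0 < f s := by
  by_contra! hneg
  set Z := Set.Icc a b ∩ f ⁻¹' Set.Iic 0
  have hZ : Z.Nonempty := hneg
  have hZbdd : BddBelow Z := ⟨a, fun z hz => hz.1.1⟩
  have hs : sInf Z ∈ Z :=
    (hf.preimage_isClosed_of_isClosed isClosed_Icc isClosed_Iic).csInf_mem hZ hZbdd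
  refine not_lt.2 hs.2 (h _ hs.1 fun t ht => ?_)
  by_contra! hft
  exact not_le.2 ht.2 (csInf_le hZbdd ⟨⟨ht.1, ht.2.le.trans hs.1.2⟩, hft⟩)

def pairsSumLt (N : ℕ) : Finset (ℕ × ℕ) :=
  (range N ×ˢ range N).filter fun p => p.1 + p.2 < N

@[simp]
theorem mem_pairsSumLt {N : ℕ} {p : ℕ × ℕ} : p ∈ pairsSumLt N ↔ p.1 + p.2 < N := by
  simp only [pairsSumLt, mem_filter, mem_product, mem_range]
  omega

theorem monotone_pairsSumLt : Monotone pairsSumLt := fun N N' hN p hp => by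
  simp only [mem_pairsSumLt] at hp ⊢
  omega

theorem HasSum.tendsto_sum_pairsSumLt {M : Type*} [AddCommMonoid M] [TopologicalSpace M]
    {f : ℕ × ℕ → M} {a : M} (hf : HasSum f a) :
    Tendsto (fun N => ∑ p ∈ pairsSumLt N, f p) atTop (𝓝 a) :=
  hf.comp <| tendsto_atTop_finset_of_monotone monotone_pairsSumLt fun p =>
    ⟨p.1 + p.2 + 1, mem_pairsSumLt.2 (Nat.lt_succ_self _)⟩

def momentTerm (ℓ : ℕ) (u : ℕ → ℝ → ℝ) (j : ℕ) (t : ℝ) (n : ℕ) : ℝ :=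
  if ℓ + 1 ≤ n then (n : ℝ) ^ j * u n t else 0

def partialMoment (ℓ : ℕ) (u : ℕ → ℝ → ℝ) (j N : ℕ) (t : ℝ) : ℝ :=
  ∑ n ∈ range N, momentTerm ℓ u j t n

def MomentsConvergeUniformly (ℓ : ℕ) (T : ℝ) (u : ℕ → ℝ → ℝ) : Prop :=
  ∀ j, TendstoUniformlyOn (partialMoment ℓ u j) (largeMoment ℓ u j) atTop (Set.Icc 0 T)

def partialMomentDeriv (ℓ : ℕ) (u : ℕ → ℝ → ℝ) (k N : ℕ) (t : ℝ) : ℝ :=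
  ∑ n ∈ range N, if ℓ + 1 ≤ n then (n : ℝ) ^ k * largeRHS ℓ u n t else 0

/-- An `i`-cluster and a `j`-cluster coagulate, emitting `ℓ` monomers, into an
`(i + j - ℓ)`-cluster. -/
def coagTerm (ℓ : ℕ) (u : ℕ → ℝ → ℝ) (k : ℕ) (t : ℝ) (p : ℕ × ℕ) : ℝ :=
  momentTerm ℓ u 1 t p.1 * momentTerm ℓ u 1 t p.2 * ((p.1 + p.2 - ℓ : ℕ) : ℝ) ^ k

def coagMoment (ℓ : ℕ) (u : ℕ → ℝ → ℝ) (k : ℕ) (t : ℝ) : ℝ :=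
  ∑ q ∈ range (k + 1), ∑ r ∈ range (k + 1), ∑ s ∈ range (k + 1),
    if q + r + s = k then
      (k.factorial : ℝ) / (q.factorial * r.factorial * s.factorial) * (-(ℓ : ℝ)) ^ q *
        (largeMoment ℓ u (r + 1) t * largeMoment ℓ u (s + 1) t)
    else 0

def momentRHS (ℓ : ℕ) (u : ℕ → ℝ → ℝ) (k : ℕ) (t : ℝ) : ℝ :=
  -2 * largeMoment ℓ u (k + 1) t / largeMoment ℓ u 1 t
    + ∑ q ∈ range (k + 1), ∑ r ∈ range (k + 1), ∑ s ∈ range (k + 1),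
        if q + r + s = k then
          (k.factorial : ℝ) / (q.factorial * r.factorial * s.factorial) * (-(ℓ : ℝ)) ^ q *
            (largeMoment ℓ u (r + 1) t * largeMoment ℓ u (s + 1) t / largeMoment ℓ u 1 t ^ 2)
        else 0

section Algebra

variable {ℓ : ℕ} {u : ℕ → ℝ → ℝ}

theorem m1large_eq_largeMoment_one : m1large ℓ u = largeMoment ℓ u 1 := by
  ext t
  simp only [m1large, largeMoment, pow_one]

theorem momentRHS_eq (k : ℕ) (t : ℝ) :
    momentRHS ℓ u k t = coagMoment ℓ u k t / largeMoment ℓ u 1 t ^ 2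
      - 2 * largeMoment ℓ u (k + 1) t / largeMoment ℓ u 1 t := by
  simp only [momentRHS, coagMoment, sum_div, ite_div, zero_div, mul_div_assoc]
  ring

theorem coagTerm_eq (k : ℕ) (t : ℝ) (i j : ℕ) :
    coagTerm ℓ u k t (i, j) =
      ∑ q ∈ range (k + 1), ∑ r ∈ range (k + 1), ∑ s ∈ range (k + 1),
      if q + r + s = k then
        (k.factorial : ℝ) / (q.factorial * r.factorial * s.factorial) * (-(ℓ : ℝ)) ^ q *
          (momentTerm ℓ u (r + 1) t i * momentTerm ℓ u (s + 1) t j)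
      else 0 := by
  by_cases hij : ℓ + 1 ≤ i ∧ ℓ + 1 ≤ j
  · have hcast : ((i + j - ℓ : ℕ) : ℝ) = -(ℓ : ℝ) + i + j := by
      rw [Nat.cast_sub (by omega)]
      push_cast
      ring
    simp only [coagTerm, momentTerm, if_pos hij.1, if_pos hij.2, hcast,
      add_add_pow_eq_sum_trinomial, mul_sum]
    refine sum_congr rfl fun q _ => sum_congr rfl fun r _ => sum_congr rfl fun s _ => ?_
    split_ifs <;> ring
  · have hzero : momentTerm ℓ u 1 t i * momentTerm ℓ u 1 t j = 0 ∧
        ∀ r s, momentTerm ℓ u (r + 1) t i * momentTerm ℓ u (s + 1) t j = 0 := by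
      rcases not_and_or.1 hij with h | h <;> simp [momentTerm, h]
    simp [coagTerm, hzero.1, hzero.2]

theorem sum_pairsSumLt_coagTerm (k N : ℕ) (t : ℝ) :
    (∑ n ∈ range N, if ℓ + 1 ≤ n then
        (n : ℝ) ^ k * ∑ i ∈ Icc (ℓ + 1) (n - 1),
          (i : ℝ) * ((n + ℓ - i : ℕ) : ℝ) * u i t * u (n + ℓ - i) t
      else 0)
      = ∑ p ∈ pairsSumLt (N + ℓ), coagTerm ℓ u k t p := by
  simp only [← sum_filter, mul_sum, sum_sigma']
  refine sum_of_injOn (fun x => (x.2, x.1 + ℓ - x.2)) ?_ ?_ ?_ ?_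
  · rintro ⟨n, i⟩ hx ⟨n', i'⟩ hx' h
    simp only [mem_coe, mem_sigma, mem_filter, mem_range, mem_Icc,
      Prod.mk.injEq] at hx hx' h
    obtain ⟨rfl, h⟩ := h
    obtain rfl : n = n' := by omega
    rfl
  · rintro ⟨n, i⟩ hx
    simp only [mem_coe, mem_sigma, mem_filter, mem_range, mem_Icc,
      mem_pairsSumLt] at hx ⊢
    omega
  · rintro ⟨i, j⟩ hp hnot
    rw [mem_pairsSumLt] at hp
    by_cases hij : ℓ + 1 ≤ i ∧ ℓ + 1 ≤ j
    · refine absurd ⟨⟨i + j - ℓ, i⟩, ?_, Prod.ext rfl (by dsimp only; omega)⟩ hnot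
      simp only [mem_coe, mem_sigma, mem_filter, mem_range, mem_Icc]
      omega
    · rcases not_and_or.1 hij with h | h <;> simp [coagTerm, momentTerm, h]
  · rintro ⟨n, i⟩ hx
    simp only [mem_sigma, mem_filter, mem_range, mem_Icc] at hx
    simp only [coagTerm, momentTerm, if_pos hx.2.1, if_pos (show ℓ + 1 ≤ n + ℓ - i by omega),
      show i + (n + ℓ - i) - ℓ = n by omega]
    ring

theorem partialMomentDeriv_eq (k N : ℕ) (t : ℝ) :
    partialMomentDeriv ℓ u k N t
      = (∑ p ∈ pairsSumLt (N + ℓ), coagTerm ℓ u k t p) / largeMoment ℓ u 1 t ^ 2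
        - 2 * partialMoment ℓ u (k + 1) N t / largeMoment ℓ u 1 t := by
  rw [← sum_pairsSumLt_coagTerm, ← m1large_eq_largeMoment_one, partialMoment, sum_div,
    mul_sum, sum_div, ← sum_sub_distrib]
  refine sum_congr rfl fun n _ => ?_
  simp only [momentTerm, largeRHS]
  split_ifs <;> ring

theorem momentRHS_one {t : ℝ} (hm : largeMoment ℓ u 1 t ≠ 0) :
    momentRHS ℓ u 1 t = -ℓ := by
  simp only [momentRHS, sum_range_succ, sum_range_zero]
  norm_num [Nat.factorial]
  field_simp
  ring

theorem two_sub_sq_le_momentRHS_two {t : ℝ} (hm : 0 < largeMoment ℓ u 1 t)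
    (h : (ℓ + 1) * largeMoment ℓ u 1 t ≤ largeMoment ℓ u 2 t) :
    2 - (ℓ : ℝ) ^ 2 ≤ momentRHS ℓ u 2 t := by
  set y := largeMoment ℓ u 2 t / largeMoment ℓ u 1 t
  have hy : ℓ + 1 ≤ y := (le_div_iff₀ hm).2 h
  have hRHS : momentRHS ℓ u 2 t = 2 * (y - ℓ) ^ 2 - ℓ ^ 2 := by
    simp only [y, momentRHS, sum_range_succ, sum_range_zero]
    norm_num [Nat.factorial]
    field_simp
    ring
  nlinarith

end Algebra

namespace IsLargeSolution

variable {ℓ : ℕ} {T : ℝ} {u : ℕ → ℝ → ℝ} (hu : IsLargeSolution ℓ T u)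
include hu

theorem momentTerm_nonneg {t : ℝ} (ht : t ∈ Set.Icc 0 T) (j n : ℕ) :
    0 ≤ momentTerm ℓ u j t n := by
  unfold momentTerm
  split_ifs with hn
  · exact mul_nonneg (by positivity) (hu.mem n hn t ht).1
  · exact le_rfl

theorem largeMoment_nonneg {t : ℝ} (ht : t ∈ Set.Icc 0 T) (j : ℕ) :
    0 ≤ largeMoment ℓ u j t :=
  tsum_nonneg (hu.momentTerm_nonneg ht j)

theorem continuousOn_momentTerm (j n : ℕ) :
    ContinuousOn (fun t => momentTerm ℓ u j t n) (Set.Icc 0 T) := by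
  unfold momentTerm
  split_ifs with hn
  · exact continuousOn_const.mul (hu.contDiff n hn).continuousOn
  · exact continuousOn_const

theorem continuousOn_partialMoment (j N : ℕ) :
    ContinuousOn (partialMoment ℓ u j N) (Set.Icc 0 T) :=
  continuousOn_finsetSum _ fun n _ => hu.continuousOn_momentTerm j n

theorem continuousOn_sum_coagTerm (k : ℕ) (s : Finset (ℕ × ℕ)) :
    ContinuousOn (fun t => ∑ p ∈ s, coagTerm ℓ u k t p) (Set.Icc 0 T) :=
  continuousOn_finsetSum _ fun p _ =>
    ((hu.continuousOn_momentTerm 1 p.1).mul (hu.continuousOn_momentTerm 1 p.2)).mul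
      continuousOn_const

theorem coagTerm_nonneg {t : ℝ} (ht : t ∈ Set.Icc 0 T) (k : ℕ) (p : ℕ × ℕ) :
    0 ≤ coagTerm ℓ u k t p :=
  mul_nonneg (mul_nonneg (hu.momentTerm_nonneg ht 1 p.1) (hu.momentTerm_nonneg ht 1 p.2))
    (by positivity)

theorem hasDerivWithinAt_partialMoment (k N : ℕ) {t : ℝ} (ht : t ∈ Set.Icc 0 T) :
    HasDerivWithinAt (partialMoment ℓ u k N) (partialMomentDeriv ℓ u k N t)
      (Set.Icc 0 T) t := by
  refine HasDerivWithinAt.fun_sum fun n _ => ?_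
  unfold momentTerm
  split_ifs with hn
  · exact (hu.ode n hn t ht).const_mul _
  · exact hasDerivWithinAt_const _ _ _

variable (hmom : MomentsConvergeUniformly ℓ T u)
include hmom

theorem hasSum_momentTerm {t : ℝ} (ht : t ∈ Set.Icc 0 T) (j : ℕ) :
    HasSum (momentTerm ℓ u j t) (largeMoment ℓ u j t) :=
  (hasSum_iff_tendsto_nat_of_nonneg (hu.momentTerm_nonneg ht j) _).2 ((hmom j).tendsto_at ht)

theorem continuousOn_largeMoment (j : ℕ) : ContinuousOn (largeMoment ℓ u j) (Set.Icc 0 T) :=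
  (hmom j).continuousOn (Frequently.of_forall (hu.continuousOn_partialMoment j))

theorem continuousOn_coagMoment (k : ℕ) : ContinuousOn (coagMoment ℓ u k) (Set.Icc 0 T) := by
  refine continuousOn_finsetSum _ fun q _ => continuousOn_finsetSum _ fun r _ =>
    continuousOn_finsetSum _ fun s _ => ?_
  split_ifs
  · exact continuousOn_const.mul
      ((hu.continuousOn_largeMoment hmom _).mul (hu.continuousOn_largeMoment hmom _))
  · exact continuousOn_const

theorem hasSum_coagTerm {t : ℝ} (ht : t ∈ Set.Icc 0 T) (k : ℕ) :
    HasSum (coagTerm ℓ u k t) (coagMoment ℓ u k t) := by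
  have hprod : ∀ r s,
      HasSum (fun p : ℕ × ℕ => momentTerm ℓ u r t p.1 * momentTerm ℓ u s t p.2)
      (largeMoment ℓ u r t * largeMoment ℓ u s t) := fun r s =>
    (hu.hasSum_momentTerm hmom ht r).mul (hu.hasSum_momentTerm hmom ht s)
      ((hu.hasSum_momentTerm hmom ht r).summable.mul_of_nonneg
        (hu.hasSum_momentTerm hmom ht s).summable
        (hu.momentTerm_nonneg ht r) (hu.momentTerm_nonneg ht s))
  have hterm : ∀ q r s, HasSum (fun p : ℕ × ℕ => if q + r + s = k then
        (k.factorial : ℝ) / (q.factorial * r.factorial * s.factorial) * (-(ℓ : ℝ)) ^ q *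
          (momentTerm ℓ u (r + 1) t p.1 * momentTerm ℓ u (s + 1) t p.2) else 0)
      (if q + r + s = k then
        (k.factorial : ℝ) / (q.factorial * r.factorial * s.factorial) * (-(ℓ : ℝ)) ^ q *
          (largeMoment ℓ u (r + 1) t * largeMoment ℓ u (s + 1) t) else 0) := by
    intro q r s
    split_ifs
    · exact (hprod _ _).mul_left _
    · exact hasSum_zero
  convert hasSum_sum (s := range (k + 1)) fun q _ => hasSum_sum (s := range (k + 1))
    fun r _ => hasSum_sum (s := range (k + 1)) fun s _ => hterm q r s using 1
  · ext ⟨i, j⟩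
    exact coagTerm_eq k t i j
  · rfl

theorem tendstoUniformlyOn_partialMomentDeriv {a b : ℝ} (hJ : Set.Icc a b ⊆ Set.Icc 0 T)
    (hpos : ∀ t ∈ Set.Icc a b, 0 < largeMoment ℓ u 1 t) (k : ℕ) :
    TendstoUniformlyOn (partialMomentDeriv ℓ u k) (momentRHS ℓ u k) atTop (Set.Icc a b) := by
  have hm := (hu.continuousOn_largeMoment hmom 1).mono hJ
  have hm0 : ∀ t ∈ Set.Icc a b, largeMoment ℓ u 1 t ≠ 0 := fun t ht => (hpos t ht).ne'
  have hm2 : ∀ t ∈ Set.Icc a b, largeMoment ℓ u 1 t ^ 2 ≠ 0 :=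
    fun t ht => pow_ne_zero 2 (hm0 t ht)
  have hcoag : TendstoUniformlyOn
      (fun N t =>
        (∑ p ∈ pairsSumLt (N + ℓ), coagTerm ℓ u k t p) / largeMoment ℓ u 1 t ^ 2)
      (fun t => coagMoment ℓ u k t / largeMoment ℓ u 1 t ^ 2) atTop (Set.Icc a b) :=
    Monotone.tendstoUniformlyOn_of_forall_tendsto isCompact_Icc
      (fun N => ((hu.continuousOn_sum_coagTerm k _).mono hJ).div (hm.pow 2) hm2)
      (fun t ht N N' hN => div_le_div_of_nonneg_right
        (sum_le_sum_of_subset_of_nonneg (monotone_pairsSumLt (by omega))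
          fun p _ _ => hu.coagTerm_nonneg (hJ ht) k p) (sq_nonneg _))
      (((hu.continuousOn_coagMoment hmom k).mono hJ).div (hm.pow 2) hm2)
      (fun t ht => (((hu.hasSum_coagTerm hmom (hJ ht) k).tendsto_sum_pairsSumLt.comp
        (tendsto_add_atTop_nat ℓ)).div_const _))
  have hloss : TendstoUniformlyOn
      (fun N t => 2 * partialMoment ℓ u (k + 1) N t / largeMoment ℓ u 1 t)
      (fun t => 2 * largeMoment ℓ u (k + 1) t / largeMoment ℓ u 1 t) atTop (Set.Icc a b) :=
    Monotone.tendstoUniformlyOn_of_forall_tendsto isCompact_Icc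
      (fun N => (continuousOn_const.mul ((hu.continuousOn_partialMoment _ N).mono hJ)).div hm hm0)
      (fun t ht N N' hN => div_le_div_of_nonneg_right (mul_le_mul_of_nonneg_left
        (sum_le_sum_of_subset_of_nonneg (range_subset_range.2 hN)
          fun n _ _ => hu.momentTerm_nonneg (hJ ht) _ n) zero_le_two) (hpos t ht).le)
      ((continuousOn_const.mul ((hu.continuousOn_largeMoment hmom _).mono hJ)).div hm hm0)
      (fun t ht => (((hmom (k + 1)).tendsto_at (hJ ht)).const_mul 2).div_const _)
  convert hcoag.sub hloss using 1
  · ext N t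
    exact partialMomentDeriv_eq k N t
  · ext t
    exact momentRHS_eq k t

theorem continuousOn_partialMomentDeriv {a b : ℝ} (hJ : Set.Icc a b ⊆ Set.Icc 0 T)
    (hpos : ∀ t ∈ Set.Icc a b, 0 < largeMoment ℓ u 1 t) (k N : ℕ) :
    ContinuousOn (partialMomentDeriv ℓ u k N) (Set.Icc a b) := by
  have hm := (hu.continuousOn_largeMoment hmom 1).mono hJ
  rw [show partialMomentDeriv ℓ u k N = _ from funext (partialMomentDeriv_eq k N)]
  exact (((hu.continuousOn_sum_coagTerm k _).mono hJ).div (hm.pow 2)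
    fun t ht => pow_ne_zero 2 (hpos t ht).ne').sub
    ((continuousOn_const.mul ((hu.continuousOn_partialMoment _ N).mono hJ)).div hm
      fun t ht => (hpos t ht).ne')

theorem hasDerivWithinAt_largeMoment {a b : ℝ} (hJ : Set.Icc a b ⊆ Set.Icc 0 T)
    (hpos : ∀ t ∈ Set.Icc a b, 0 < largeMoment ℓ u 1 t) (k : ℕ) {t : ℝ}
    (ht : t ∈ Set.Icc a b) :
    HasDerivWithinAt (largeMoment ℓ u k) (momentRHS ℓ u k t) (Set.Icc a b) t :=
  hasDerivWithinAt_Icc_of_tendstoUniformlyOn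
    (fun N _ hx => (hu.hasDerivWithinAt_partialMoment k N (hJ hx)).mono hJ)
    (hu.continuousOn_partialMomentDeriv hmom hJ hpos k)
    (fun _ hx => (hmom k).tendsto_at (hJ hx))
    (hu.tendstoUniformlyOn_partialMomentDeriv hmom hJ hpos k) ht

theorem hasDerivAt_largeMoment {s : ℝ} (hs : s ≤ T)
    (hpos : ∀ t ∈ Set.Ico 0 s, 0 < largeMoment ℓ u 1 t) (k : ℕ) {x : ℝ}
    (hx : x ∈ Set.Ioo 0 s) :
    HasDerivAt (largeMoment ℓ u k) (momentRHS ℓ u k x) x := by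
  have hxb : x < (x + s) / 2 := by linarith [hx.2]
  have hbs : (x + s) / 2 < s := by linarith [hx.2]
  exact (hu.hasDerivWithinAt_largeMoment hmom (Set.Icc_subset_Icc_right (hbs.le.trans hs))
    (fun t ht => hpos t ⟨ht.1, ht.2.trans_lt hbs⟩) k ⟨hx.1.le, hxb.le⟩).hasDerivAt
    (Icc_mem_nhds hx.1 hxb)

theorem add_one_mul_largeMoment_le {t : ℝ} (ht : t ∈ Set.Icc 0 T) (j : ℕ) :
    (ℓ + 1) * largeMoment ℓ u j t ≤ largeMoment ℓ u (j + 1) t := by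
  refine hasSum_le (fun n => ?_) ((hu.hasSum_momentTerm hmom ht j).mul_left _)
    (hu.hasSum_momentTerm hmom ht (j + 1))
  unfold momentTerm
  split_ifs with hn
  · have hcast : (ℓ + 1 : ℝ) ≤ n := by exact_mod_cast hn
    have hu0 := (hu.mem n hn t ht).1
    rw [pow_succ]
    nlinarith [mul_le_mul_of_nonneg_left hcast (mul_nonneg (pow_nonneg n.cast_nonneg j) hu0)]
  · rw [mul_zero]

theorem largeMoment_eq_zero {t : ℝ} (ht : t ∈ Set.Icc 0 T) (h : largeMoment ℓ u 1 t = 0)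
    (j : ℕ) : largeMoment ℓ u j t = 0 := by
  have hterms : momentTerm ℓ u 1 t = 0 :=
    (hasSum_zero_iff_of_nonneg (hu.momentTerm_nonneg ht 1)).1 (h ▸ hu.hasSum_momentTerm hmom ht 1)
  have hzero : momentTerm ℓ u j t = 0 := by
    ext n
    have hn := congrFun hterms n
    simp only [momentTerm, Pi.zero_apply, pow_one] at hn ⊢
    split_ifs at hn ⊢ with h
    · rw [(mul_eq_zero.1 hn).resolve_left (Nat.cast_pos.2 (by omega)).ne', mul_zero]
    · rfl
  exact (congrArg tsum hzero).trans tsum_zero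

theorem largeMoment_one_pos_of_forall_Ico
    (hinit : HasSum (fun i : ℕ => if ℓ + 1 ≤ i then u i 0 else 0) 1) {s : ℝ}
    (hs : s ∈ Set.Icc 0 T) (hpos : ∀ t ∈ Set.Ico 0 s, 0 < largeMoment ℓ u 1 t) :
    0 < largeMoment ℓ u 1 s := by
  have h0 : (0 : ℝ) ∈ Set.Icc 0 T := ⟨le_rfl, hs.1.trans hs.2⟩
  have hmass : largeMoment ℓ u 0 0 = 1 :=
    (hu.hasSum_momentTerm hmom h0 0).unique <| by
      convert hinit using 2 with n
      simp only [momentTerm, pow_zero, one_mul]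
  have hm0 := hu.add_one_mul_largeMoment_le hmom h0 0
  rcases hs.1.eq_or_lt with rfl | hs0
  · rw [hmass] at hm0
    linarith
  by_contra! hle
  have hm1s := le_antisymm hle (hu.largeMoment_nonneg hs 1)
  have hm2s := hu.largeMoment_eq_zero hmom hs hm1s 2
  have hsub : Set.Icc 0 s ⊆ Set.Icc 0 T := Set.Icc_subset_Icc_right hs.2
  have hderiv := fun k x (hx : x ∈ interior (Set.Icc 0 s)) =>
    hu.hasDerivAt_largeMoment hmom hs.2 hpos k (interior_Icc (a := (0 : ℝ)) ▸ hx)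
  have hpos' : ∀ x ∈ interior (Set.Icc 0 s), 0 < largeMoment ℓ u 1 x := fun x hx => by
    rw [interior_Icc] at hx
    exact hpos x ⟨hx.1.le, hx.2⟩
  have h1 := (convex_Icc 0 s).image_sub_le_mul_sub_of_deriv_le
    ((hu.continuousOn_largeMoment hmom 1).mono hsub)
    (fun x hx => (hderiv 1 x hx).differentiableAt.differentiableWithinAt)
    (fun x hx => by rw [(hderiv 1 x hx).deriv, momentRHS_one (hpos' x hx).ne'])
    0 ⟨le_rfl, hs0.le⟩ s ⟨hs0.le, le_rfl⟩ hs0.le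
  have h2 := (convex_Icc 0 s).mul_sub_le_image_sub_of_le_deriv
    ((hu.continuousOn_largeMoment hmom 2).mono hsub)
    (fun x hx => (hderiv 2 x hx).differentiableAt.differentiableWithinAt)
    (fun x hx => by
      rw [(hderiv 2 x hx).deriv]
      exact two_sub_sq_le_momentRHS_two (hpos' x hx)
        (hu.add_one_mul_largeMoment_le hmom (hsub (interior_subset hx)) 1))
    0 ⟨le_rfl, hs0.le⟩ s ⟨hs0.le, le_rfl⟩ hs0.le
  have h20 := hu.add_one_mul_largeMoment_le hmom h0 1
  rw [hm1s] at h1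
  rw [hm2s] at h2
  nlinarith

theorem largeMoment_one_pos (hinit : HasSum (fun i : ℕ => if ℓ + 1 ≤ i then u i 0 else 0) 1) :
    ∀ t ∈ Set.Icc 0 T, 0 < largeMoment ℓ u 1 t :=
  forall_pos_of_forall_Ico_pos (hu.continuousOn_largeMoment hmom 1) fun _ hs hpos =>
    hu.largeMoment_one_pos_of_forall_Ico hmom hinit hs hpos

end IsLargeSolution

theorem moment_hierarchy_general (ℓ : ℕ) (T : ℝ)
    (u : ℕ → ℝ → ℝ) (hu : IsPreGelLargeSolution ℓ T u)
    (hinit_sum : HasSum (fun i : ℕ => if ℓ + 1 ≤ i then u i 0 else 0) 1)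
    (hmom : ∀ j : ℕ, TendstoUniformlyOn
      (fun N t => ∑ n ∈ Finset.range N,
        if ℓ + 1 ≤ n then (n : ℝ) ^ j * u n t else 0)
      (largeMoment ℓ u j) atTop (Set.Icc 0 T)) :
    ∀ k : ℕ, 1 ≤ k → ∀ t ∈ Set.Icc (0 : ℝ) T,
      HasDerivWithinAt (largeMoment ℓ u k)
        (-2 * largeMoment ℓ u (k + 1) t / largeMoment ℓ u 1 t
          + ∑ q ∈ Finset.range (k + 1), ∑ r ∈ Finset.range (k + 1),
              ∑ s ∈ Finset.range (k + 1),
                if q + r + s = k then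
                  ((k.factorial : ℝ) /
                      ((q.factorial : ℝ) * (r.factorial : ℝ) * (s.factorial : ℝ))) *
                    (-(ℓ : ℝ)) ^ q *
                    (largeMoment ℓ u (r + 1) t * largeMoment ℓ u (s + 1) t /
                      (largeMoment ℓ u 1 t) ^ 2)
                else 0)
        (Set.Icc 0 T) t := by
  intro k _ t ht
  exact hu.hasDerivWithinAt_largeMoment hmom subset_rfl
    (hu.largeMoment_one_pos hmom hinit_sum) k ht

/-- moment hierarchy: let `ℓ ≥ 1` and let `u` be a pre-gelation
large-cluster solution on `[0,T]` all of whose moment series converge uniformly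
on `[0,T]`.  Then for every `k ≥ 1` and `t ∈ [0,T]`,
`ṁ_k = −2 m_{k+1}/m₁ + ∑_{q+r+s=k} (k!/(q!r!s!)) (−ℓ)^q m_{r+1} m_{s+1}/m₁²`. -/
theorem moment_hierarchy (ℓ : ℕ) (hℓ : 1 ≤ ℓ) (T : ℝ) (hT : 0 < T)
    (u : ℕ → ℝ → ℝ) (hu : IsPreGelLargeSolution ℓ T u)
    (hinit_nonneg : ∀ n, ℓ < n → 0 ≤ u n 0)
    (hinit_sum : HasSum (fun i : ℕ => if ℓ + 1 ≤ i then u i 0 else 0) 1)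
    (hmom : ∀ j : ℕ, TendstoUniformlyOn
      (fun N t => ∑ n ∈ Finset.range N,
        if ℓ + 1 ≤ n then (n : ℝ) ^ j * u n t else 0)
      (largeMoment ℓ u j) atTop (Set.Icc 0 T)) :
    ∀ k : ℕ, 1 ≤ k → ∀ t ∈ Set.Icc (0 : ℝ) T,
      HasDerivWithinAt (largeMoment ℓ u k)
        (-2 * largeMoment ℓ u (k + 1) t / largeMoment ℓ u 1 t
          + ∑ q ∈ Finset.range (k + 1), ∑ r ∈ Finset.range (k + 1),
              ∑ s ∈ Finset.range (k + 1),
                if q + r + s = k then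
                  ((k.factorial : ℝ) /
                      ((q.factorial : ℝ) * (r.factorial : ℝ) * (s.factorial : ℝ))) *
                    (-(ℓ : ℝ)) ^ q *
                    (largeMoment ℓ u (r + 1) t * largeMoment ℓ u (s + 1) t /
                      (largeMoment ℓ u 1 t) ^ 2)
                else 0)
        (Set.Icc 0 T) t :=
  moment_hierarchy_general ℓ T u hu hinit_sum hmom
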